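/- Let A be a normal-form udpda with initial state q0 whose unique infinite computation starting at (q0,⊥) reads infinitely many input symbols, and let t ∈ {a,f}^ω be the transcript of this computation, written uniquely as t = f^{e_0} a f^{e_1} a f^{e_2} a ⋯ with e_i ∈ ℕ for all i ≥ 0. Then for every i ≥ 0, a^i ∈ L(A) if and only if e_i > 0. -/

import Mathlib

/-- The auxiliary alphabet `{a, f}` used in transcripts of computations. -/
inductive AF
  | a
  | f
deriving DecidableEq

/-- The kind of a control state of a normal-form udpda: internal, push, or pop. -/
inductive StKind
  | internal
  | push
  | pop
deriving DecidableEq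

/-- A normal-form udpda: the state set is partitioned (by `kind`) into internal
states `Q₀`, push states `Q₊₁` and pop states `Q₋₁`, with total transition
functions `δint`, `δpush`, `δpop`, and `reads q = true` iff the transitions
from `q` read the input symbol `a` (i.e. `q ∈ R`). -/
structure NFPDA (Q Γ : Type) where
  finQ : Finite Q
  finΓ : Finite Γ
  bot : Γ
  init : Q
  final : Set Q
  kind : Q → StKind
  δint : Q → Q
  δpush : Q → Q × Γ
  δpop : Q → Γ → Q
  reads : Q → Bool

namespace NFPDA

variable {Q Γ : Type}

/-- Valid stack contents: a word in `(Γ∖{⊥})*⊥`. -/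
def IsStack (A : NFPDA Q Γ) (s : List Γ) : Prop :=
  ∃ s', A.bot ∉ s' ∧ s = s' ++ [A.bot]

/-- The unique move available at a configuration.  (A pop transition with the
bottom symbol on top of the stack leaves the stack unchanged; on valid stacks
the bottom symbol is on top exactly when the stack is a singleton.) -/
def step (A : NFPDA Q Γ) : Q × List Γ → Q × List Γ := fun c =>
  match A.kind c.1 with
  | .internal => (A.δint c.1, c.2)
  | .push => ((A.δpush c.1).1, (A.δpush c.1).2 :: c.2)
  | .pop =>
    match c.2 with
    | [] => (c.1, [])
    | [γ] => (A.δpop c.1 γ, [γ])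
    | γ :: s' => (A.δpop c.1 γ, s')

/-- The configuration reached after `k` moves of the unique infinite
computation starting at `c`. -/
def iter (A : NFPDA Q Γ) (c : Q × List Γ) (k : ℕ) : Q × List Γ := A.step^[k] c

open Classical in
/-- The contribution `μ(q)σ` of one move from state `q` to the transcript:
`f` if `q` is final, followed by `a` if the move reads an input symbol. -/
noncomputable def emit (A : NFPDA Q Γ) (q : Q) : List AF :=
  (if q ∈ A.final then [AF.f] else []) ++ (if A.reads q then [AF.a] else [])

/-- The transcript `μ(q₁)σ₁μ(q₂)σ₂⋯μ(q_k)σ_k` of the first `k` moves of the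
computation starting at `c`. -/
noncomputable def transcriptN (A : NFPDA Q Γ) (c : Q × List Γ) (k : ℕ) : List AF :=
  ((List.range k).map fun i => A.emit (A.iter c i).1).flatten

/-- The number of input symbols read during the first `k` moves of the
computation starting at `c`. -/
def readCount (A : NFPDA Q Γ) (c : Q × List Γ) (k : ℕ) : ℕ :=
  ((List.range k).filter fun i => A.reads (A.iter c i).1).length

/-- The language of a normal-form udpda: `a^n` is accepted iff the unique
computation starting at `(q₀, ⊥)` reaches a final state having read exactly
`n` input symbols. -/
def lang (A : NFPDA Q Γ) : Set ℕ :=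
  {n | ∃ k, A.readCount (A.init, [A.bot]) k = n ∧ (A.iter (A.init, [A.bot]) k).1 ∈ A.final}

end NFPDA

/-!
Since `t` extends every finite transcript, its letters `f` are exactly those emitted by final
states, and the number of `a`s before such an `f` is the number of input symbols read so far.
Hence `a^i ∈ L(A)` iff some `f` of `t` is preceded by exactly `i` letters `a`. In
`t = f^{e₀} a f^{e₁} a ⋯` the letters preceded by exactly `i` letters `a` form the block
`f^{e_i} a`, which contains an `f` iff `e_i > 0`.
-/

namespace AF

theorem eq_f_of_ne_a {x : AF} (h : x ≠ AF.a) : x = AF.f := by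
  cases x <;> simp_all

def countA (t : ℕ → AF) (n : ℕ) : ℕ := ((List.range n).map t).count AF.a

theorem countA_zero (t : ℕ → AF) : countA t 0 = 0 := rfl

theorem countA_succ (t : ℕ → AF) (n : ℕ) :
    countA t (n + 1) = countA t n + if t n = AF.a then 1 else 0 := by
  simp [countA, List.range_succ, List.count_cons]

theorem countA_add_eq_of_forall_ne_a {t : ℕ → AF} {n d : ℕ}
    (h : ∀ x, n ≤ x → x < n + d → t x ≠ AF.a) : countA t (n + d) = countA t n := by
  induction d with
  | zero => rfl
  | succ d ih =>
    rw [← add_assoc, countA_succ, if_neg (h _ (by omega) (by omega)),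
      ih fun x hx hx' => h x hx (by omega), add_zero]

end AF

theorem Nat.exists_le_lt_succ_of_le_of_lt {f : ℕ → ℕ} {n k : ℕ} (h₀ : f 0 ≤ n)
    (hk : n < f k) : ∃ m, f m ≤ n ∧ n < f (m + 1) := by
  induction k with
  | zero => omega
  | succ k ih => exact if h : n < f k then ih h else ⟨k, by omega, hk⟩

section Blocks

open Finset

def blockStart (e : ℕ → ℕ) (i : ℕ) : ℕ := ∑ j ∈ range i, e j + i

theorem blockStart_zero (e : ℕ → ℕ) : blockStart e 0 = 0 := by simp [blockStart]

theorem blockStart_succ (e : ℕ → ℕ) (i : ℕ) :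
    blockStart e (i + 1) = blockStart e i + e i + 1 := by
  simp only [blockStart, sum_range_succ]; ring

theorem sum_range_succ_add_eq_blockStart (e : ℕ → ℕ) (i : ℕ) :
    ∑ j ∈ range (i + 1), e j + i = blockStart e i + e i := by
  simp only [blockStart, sum_range_succ]; ring

theorem monotone_blockStart (e : ℕ → ℕ) : Monotone (blockStart e) :=
  monotone_nat_of_le_succ fun i => by rw [blockStart_succ]; omega

theorem exists_mem_block (e : ℕ → ℕ) (n : ℕ) :
    ∃ i, blockStart e i ≤ n ∧ n ≤ blockStart e i + e i := by
  have hn : n < blockStart e (n + 1) := by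
    simp only [blockStart]; omega
  obtain ⟨i, hi, hi'⟩ := Nat.exists_le_lt_succ_of_le_of_lt (by simp [blockStart_zero]) hn
  exact ⟨i, hi, by rw [blockStart_succ] at hi'; omega⟩

variable {t : ℕ → AF} {e : ℕ → ℕ}

theorem ne_a_of_mem_block (ha' : ∀ n, t n = AF.a → ∃ i, n = blockStart e i + e i) {i n : ℕ}
    (h : blockStart e i ≤ n) (h' : n < blockStart e i + e i) : t n ≠ AF.a := by
  intro hn
  obtain ⟨j, rfl⟩ := ha' n hn
  rcases lt_trichotomy j i with hji | rfl | hij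
  · have := monotone_blockStart e (Nat.succ_le_of_lt hji)
    rw [blockStart_succ] at this
    omega
  · omega
  · have := monotone_blockStart e (Nat.succ_le_of_lt hij)
    rw [blockStart_succ] at this
    omega

theorem countA_blockStart_add (ha' : ∀ n, t n = AF.a → ∃ i, n = blockStart e i + e i)
    {i d : ℕ} (hd : d ≤ e i) :
    AF.countA t (blockStart e i + d) = AF.countA t (blockStart e i) :=
  AF.countA_add_eq_of_forall_ne_a fun _ hx hx' => ne_a_of_mem_block ha' hx (by omega)

theorem countA_blockStart (ha : ∀ i, t (blockStart e i + e i) = AF.a)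
    (ha' : ∀ n, t n = AF.a → ∃ i, n = blockStart e i + e i) (i : ℕ) :
    AF.countA t (blockStart e i) = i := by
  induction i with
  | zero => rw [blockStart_zero, AF.countA_zero]
  | succ i ih =>
    rw [blockStart_succ, AF.countA_succ, countA_blockStart_add ha' le_rfl, ih, if_pos (ha i)]

theorem exists_f_countA_eq_iff (ha : ∀ i, t (blockStart e i + e i) = AF.a)
    (ha' : ∀ n, t n = AF.a → ∃ i, n = blockStart e i + e i) (i : ℕ) :
    (∃ n, t n = AF.f ∧ AF.countA t n = i) ↔ 0 < e i := by
  constructor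
  · rintro ⟨n, hf, rfl⟩
    obtain ⟨j, hj, hj'⟩ := exists_mem_block e n
    obtain ⟨d, rfl⟩ := Nat.exists_eq_add_of_le hj
    rw [countA_blockStart_add ha' (by omega), countA_blockStart ha ha']
    by_contra! hej
    have : d = e j := by omega
    simp [this, ha j] at hf
  · intro hi
    exact ⟨blockStart e i, AF.eq_f_of_ne_a (ne_a_of_mem_block ha' le_rfl (by omega)),
      countA_blockStart ha ha' i⟩

end Blocks

namespace NFPDA

variable {Q Γ : Type} (A : NFPDA Q Γ) (c : Q × List Γ)

theorem transcriptN_zero : A.transcriptN c 0 = [] := rfl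

theorem transcriptN_succ (k : ℕ) :
    A.transcriptN c (k + 1) = A.transcriptN c k ++ A.emit (A.iter c k).1 := by
  simp [transcriptN, List.range_succ]

theorem readCount_succ (k : ℕ) :
    A.readCount c (k + 1) = A.readCount c k + if A.reads (A.iter c k).1 then 1 else 0 := by
  simp only [readCount, List.range_succ, List.filter_append, List.length_append]
  split_ifs with h <;> simp [h]

theorem count_a_emit (q : Q) : (A.emit q).count AF.a = if A.reads q then 1 else 0 := by
  by_cases hf : q ∈ A.final <;> cases hr : A.reads q <;> simp [emit, hf, hr]

theorem count_a_transcriptN (k : ℕ) : (A.transcriptN c k).count AF.a = A.readCount c k := by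
  induction k with
  | zero => rfl
  | succ k ih => rw [transcriptN_succ, List.count_append, ih, readCount_succ, count_a_emit]

theorem readCount_le_length_transcriptN (k : ℕ) :
    A.readCount c k ≤ (A.transcriptN c k).length :=
  A.count_a_transcriptN c k ▸ List.count_le_length

theorem getElem?_emit_eq_some_f_iff (q : Q) (j : ℕ) :
    (A.emit q)[j]? = some AF.f ↔ q ∈ A.final ∧ j = 0 := by
  by_cases hf : q ∈ A.final <;> cases hr : A.reads q <;>
    rcases j with _ | _ | j <;> simp [emit, hf, hr]

theorem getElem?_transcriptN_eq_some_f_iff (k n : ℕ) :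
    (A.transcriptN c k)[n]? = some AF.f ↔
      ∃ m < k, n = (A.transcriptN c m).length ∧ (A.iter c m).1 ∈ A.final := by
  induction k with
  | zero => simp [transcriptN_zero]
  | succ k ih =>
    rw [transcriptN_succ, List.getElem?_append]
    split_ifs with hn
    · rw [ih]
      refine ⟨fun ⟨m, hm, hfin⟩ => ⟨m, by omega, hfin⟩, ?_⟩
      rintro ⟨m, hm, hnm, hfin⟩
      rcases Nat.lt_succ_iff_lt_or_eq.mp hm with hm | rfl
      · exact ⟨m, hm, hnm, hfin⟩
      · omega
    · rw [getElem?_emit_eq_some_f_iff]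
      refine ⟨fun ⟨hfin, hn0⟩ => ⟨k, lt_add_one k, by omega, hfin⟩, ?_⟩
      rintro ⟨m, hm, rfl, hfin⟩
      rcases Nat.lt_succ_iff_lt_or_eq.mp hm with hm | rfl
      · have := (List.getElem?_eq_some_iff.mp (ih.mpr ⟨m, hm, rfl, hfin⟩)).1
        omega
      · exact ⟨hfin, Nat.sub_self _⟩

def IsTranscript (t : ℕ → AF) : Prop :=
  ∀ (k i : ℕ) (h : i < (A.transcriptN c k).length), (A.transcriptN c k)[i] = t i

variable {A c} {t : ℕ → AF}

theorem IsTranscript.countA_length_transcriptN (ht : A.IsTranscript c t) (k : ℕ) :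
    AF.countA t (A.transcriptN c k).length = A.readCount c k := by
  have hmap : (List.range (A.transcriptN c k).length).map t = A.transcriptN c k :=
    List.ext_getElem (by simp) fun n _ hn => by simp [ht k n hn]
  rw [AF.countA, hmap, count_a_transcriptN]

theorem IsTranscript.mem_lang_iff (ht : A.IsTranscript (A.init, [A.bot]) t)
    (hinf : ∀ n, ∃ k, n ≤ A.readCount (A.init, [A.bot]) k) (i : ℕ) :
    i ∈ A.lang ↔ ∃ n, t n = AF.f ∧ AF.countA t n = i := by
  constructor
  · rintro ⟨k, rfl, hfin⟩
    obtain ⟨hlt, hget⟩ := List.getElem?_eq_some_iff.mp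
      ((A.getElem?_transcriptN_eq_some_f_iff _ (k + 1) _).mpr ⟨k, lt_add_one k, rfl, hfin⟩)
    exact ⟨_, (ht _ _ hlt).symm.trans hget, ht.countA_length_transcriptN k⟩
  · rintro ⟨n, hf, rfl⟩
    obtain ⟨k, hk⟩ := hinf (n + 1)
    have hn : n < (A.transcriptN (A.init, [A.bot]) k).length :=
      (Nat.lt_of_succ_le hk).trans_le (A.readCount_le_length_transcriptN _ k)
    obtain ⟨m, -, rfl, hfin⟩ := (A.getElem?_transcriptN_eq_some_f_iff _ k n).mp
      (by rw [List.getElem?_eq_getElem hn, ht k n hn, hf])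
    exact ⟨m, (ht.countA_length_transcriptN m).symm, hfin⟩

end NFPDA

/-- Let `A` be a normal-form udpda whose unique infinite
computation from `(q₀,⊥)` reads infinitely many input symbols, let
`t ∈ {a,f}^ω` be its transcript (characterized by having every finite
transcript as a prefix), and write `t = f^{e₀} a f^{e₁} a f^{e₂} a ⋯`
(so the `i`-th occurrence of `a` is at position `(Σ_{j≤i} e_j) + i`, and
these are exactly the positions of `a`).  Then `a^i ∈ L(A)` iff `e_i > 0`. -/
theorem acceptance_via_transcript (Q Γ : Type) (A : NFPDA Q Γ) (t : ℕ → AF) (e : ℕ → ℕ)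
    (hinf : ∀ n : ℕ, ∃ k : ℕ, n ≤ A.readCount (A.init, [A.bot]) k)
    (hpre : ∀ (k i : ℕ) (h : i < (A.transcriptN (A.init, [A.bot]) k).length),
        (A.transcriptN (A.init, [A.bot]) k)[i] = t i)
    (ha : ∀ i : ℕ, t ((∑ j ∈ Finset.range (i + 1), e j) + i) = AF.a)
    (ha' : ∀ n : ℕ, t n = AF.a → ∃ i : ℕ, n = (∑ j ∈ Finset.range (i + 1), e j) + i) :
    ∀ i : ℕ, i ∈ A.lang ↔ 0 < e i := by
  simp only [sum_range_succ_add_eq_blockStart] at ha ha'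
  intro i
  rw [NFPDA.IsTranscript.mem_lang_iff hpre hinf, exists_f_countA_eq_iff ha ha']
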